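/- Let δ(·), β, p(·) be as in the variable Lipschitz framework and suppose b ∈ L(δ(·)) (pointwise type) and b ≥ 0, with 0 ≤ α < n. Then for every locally integrable f and every x, |[b,M_α](f)(x)| ≤ C ‖b‖_{L(δ(·))} M_{α+δ(x)}(f)(x). -/

import Mathlib

open MeasureTheory Set

noncomputable section

/-- Axis-parallel cube in `ℝⁿ` with lower corner `a` and side length `h`. -/
def cube {n : ℕ} (a : Fin n → ℝ) (h : ℝ) : Set (Fin n → ℝ) :=
  Set.Icc a (fun i => a i + h)

/-- Lebesgue measure of the cube, as a real number. -/
def vol {n : ℕ} (a : Fin n → ℝ) (h : ℝ) : ℝ :=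
  (volume (cube a h)).toReal

/-- Mean value `b_Q` of `b` over the cube. -/
def avg {n : ℕ} (b : (Fin n → ℝ) → ℝ) (a : Fin n → ℝ) (h : ℝ) : ℝ :=
  (vol a h)⁻¹ * ∫ y in cube a h, b y

/-- Values over which the sharp maximal function takes its supremum. -/
def sharpSet {n : ℕ} (f : (Fin n → ℝ) → ℝ) (x : Fin n → ℝ) : Set ℝ :=
  {r | ∃ a c, 0 < c ∧ x ∈ cube a c ∧
    r = (vol a c)⁻¹ * ∫ y in cube a c, |f y - avg f a c|}

/-- Sharp maximal function `M^♯ f`. -/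
def sharpMax {n : ℕ} (f : (Fin n → ℝ) → ℝ) (x : Fin n → ℝ) : ℝ :=
  sSup (sharpSet f x)

/-- Values over which the (variable) fractional maximal function takes its supremum. -/
def fracSet {n : ℕ} (γ : ℝ) (f : (Fin n → ℝ) → ℝ) (x : Fin n → ℝ) : Set ℝ :=
  {r | ∃ a c, 0 < c ∧ x ∈ cube a c ∧
    r = (vol a c) ^ (γ / (n : ℝ) - 1) * ∫ y in cube a c, |f y|}

/-- Fractional maximal function `M_γ f` (with `γ` a real number; applying it with
`γ = δ x` gives the variable fractional maximal operator `M_{δ(x)}`). -/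
def fracMax {n : ℕ} (γ : ℝ) (f : (Fin n → ℝ) → ℝ) (x : Fin n → ℝ) : ℝ :=
  sSup (fracSet γ f x)

/-- Values over which the fractional maximal commutator takes its supremum. -/
def commSet {n : ℕ} (α : ℝ) (b f : (Fin n → ℝ) → ℝ) (x : Fin n → ℝ) : Set ℝ :=
  {r | ∃ a c, 0 < c ∧ x ∈ cube a c ∧
    r = (vol a c) ^ (α / (n : ℝ) - 1) * ∫ y in cube a c, |b x - b y| * |f y|}

/-- Fractional maximal commutator `M_{α,b} f`. -/
def maxComm {n : ℕ} (α : ℝ) (b f : (Fin n → ℝ) → ℝ) (x : Fin n → ℝ) : ℝ :=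
  sSup (commSet α b f x)

/-- Values for the fractional maximal operator restricted to subcubes of a fixed cube. -/
def fracSetIn {n : ℕ} (γ : ℝ) (Qa : Fin n → ℝ) (Qh : ℝ) (f : (Fin n → ℝ) → ℝ)
    (x : Fin n → ℝ) : Set ℝ :=
  {r | ∃ a c, 0 < c ∧ x ∈ cube a c ∧ cube a c ⊆ cube Qa Qh ∧
    r = (vol a c) ^ (γ / (n : ℝ) - 1) * ∫ y in cube a c, |f y|}

/-- Fractional maximal operator `M_{γ,Q₀}` restricted to subcubes of `Q₀ = cube Qa Qh`. -/
def fracMaxIn {n : ℕ} (γ : ℝ) (Qa : Fin n → ℝ) (Qh : ℝ) (f : (Fin n → ℝ) → ℝ)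
    (x : Fin n → ℝ) : ℝ :=
  sSup (fracSetIn γ Qa Qh f x)

/-- Luxemburg norm on the variable Lebesgue space `L^{p(·)}(ℝⁿ)`. -/
def LuxNorm {n : ℕ} (p : (Fin n → ℝ) → ℝ) (f : (Fin n → ℝ) → ℝ) : ℝ :=
  sInf {lam : ℝ | 0 < lam ∧ ∫ x, (|f x| / lam) ^ p x ∂volume ≤ 1}

end

/-!
Since `b ≥ 0`, on every cube `Q ∋ x` the difference `b x ∫_Q |f| - ∫_Q |b f|` equals
`∫_Q (b x - b y) |f y| dy`, and on `Q` the Lipschitz condition at `x` gives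
`|b x - b y| ≤ B ℓ(Q)^{δ x}`. As `|Q| = ℓ(Q)^n`, the factor `ℓ(Q)^{δ x}` raises the exponent
`α/n - 1` of `|Q|` to `(α + δ x)/n - 1`, so the two fractional averages over `Q` differ by at
most `B M_{α+δ(x)} f (x)`; taking suprema over `Q` yields the claim with `C = 1`.
-/

open Filter Topology

theorem abs_mul_csSup_sub_csSup_le {S T : Set ℝ} {l K : ℝ} (hl : 0 ≤ l)
    (hS : BddAbove S) (hT : BddAbove T) (hSne : S.Nonempty) (hTne : T.Nonempty)
    (hST : ∀ s ∈ S, ∃ t ∈ T, |l * s - t| ≤ K) (hTS : ∀ t ∈ T, ∃ s ∈ S, |l * s - t| ≤ K) :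
    |l * sSup S - sSup T| ≤ K := by
  rw [abs_sub_le_iff]
  constructor
  · rw [← smul_eq_mul, ← Real.sSup_smul_of_nonneg hl, sub_le_iff_le_add']
    refine csSup_le hSne.smul_set ?_
    rintro _ ⟨s, hs, rfl⟩
    obtain ⟨t, ht, hst⟩ := hST s hs
    have := le_csSup hT ht
    simp only [smul_eq_mul]
    linarith [(abs_le.1 hst).2]
  · rw [sub_le_iff_le_add']
    refine csSup_le hTne fun t ht => ?_
    obtain ⟨s, hs, hst⟩ := hTS t ht
    have := mul_le_mul_of_nonneg_left (le_csSup hS hs) hl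
    linarith [(abs_le.1 hst).1]

theorem continuous_of_abs_sub_le_mul_dist_rpow {X : Type*} [PseudoMetricSpace X]
    {b δ : X → ℝ} {B : ℝ} (hδ : ∀ x, 0 < δ x) (hb : ∀ x y, |b x - b y| ≤ B * dist x y ^ δ x) :
    Continuous b := by
  refine continuous_iff_continuousAt.2 fun x => tendsto_iff_dist_tendsto_zero.2 ?_
  have hlim : Tendsto (fun y => B * dist x y ^ δ x) (𝓝 x) (𝓝 0) := by
    have hcont : Continuous fun y => B * dist x y ^ δ x :=
      ((continuous_const.dist continuous_id).rpow_const fun _ => Or.inr (hδ x).le).const_mul B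
    simpa [Real.zero_rpow (hδ x).ne'] using hcont.tendsto x
  refine squeeze_zero (fun _ => dist_nonneg) (fun y => ?_) hlim
  rw [Real.dist_eq, abs_sub_comm]
  exact hb x y

theorem abs_mul_integral_sub_integral_mul_le {X : Type*} [MeasurableSpace X] {μ : Measure X}
    {b g : X → ℝ} {b₀ K : ℝ} (hg : Integrable g μ) (hbg : Integrable (fun y => b y * g y) μ)
    (hb : ∀ᵐ y ∂μ, |b₀ - b y| ≤ K) :
    |b₀ * ∫ y, g y ∂μ - ∫ y, b y * g y ∂μ| ≤ K * ∫ y, |g y| ∂μ := by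
  rw [← integral_const_mul b₀, ← integral_sub (hg.const_mul _) hbg, ← integral_const_mul K,
    ← Real.norm_eq_abs]
  refine norm_integral_le_of_norm_le (hg.abs.const_mul K) ?_
  filter_upwards [hb] with y hy
  rw [← sub_mul, Real.norm_eq_abs, abs_mul]
  exact mul_le_mul_of_nonneg_right hy (abs_nonneg _)

section Cube

variable {n : ℕ} {a x y : Fin n → ℝ} {c : ℝ}

noncomputable def fracAvg (γ : ℝ) (f : (Fin n → ℝ) → ℝ) (a : Fin n → ℝ) (c : ℝ) : ℝ :=
  vol a c ^ (γ / n - 1) * ∫ y in cube a c, |f y|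

theorem vol_cube (a : Fin n → ℝ) (hc : 0 ≤ c) : vol a c = c ^ n := by
  simp only [vol, cube, Real.volume_Icc_pi, add_sub_cancel_left, Finset.prod_const,
    Finset.card_univ, Fintype.card_fin]
  rw [← ENNReal.ofReal_pow hc, ENNReal.toReal_ofReal (by positivity)]

theorem dist_le_of_mem_cube (hc : 0 ≤ c) (hx : x ∈ cube a c) (hy : y ∈ cube a c) :
    dist x y ≤ c := by
  refine (dist_pi_le_iff hc).2 fun i => ?_
  rw [Real.dist_eq, abs_sub_le_iff]
  have := hx.1 i; have := hx.2 i; have := hy.1 i; have := hy.2 i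
  constructor <;> linarith

theorem vol_rpow_mul_rpow (hn : 0 < n) (a : Fin n → ℝ) (hc : 0 < c) (γ d : ℝ) :
    vol a c ^ (γ / n - 1) * c ^ d = vol a c ^ ((γ + d) / n - 1) := by
  have hn' : (n : ℝ) ≠ 0 := by positivity
  rw [vol_cube a hc.le, ← Real.rpow_natCast, ← Real.rpow_mul hc.le, ← Real.rpow_mul hc.le,
    ← Real.rpow_add hc]
  congr 1
  field_simp
  ring

theorem fracSet_nonempty (γ : ℝ) (f : (Fin n → ℝ) → ℝ) (x : Fin n → ℝ) :
    (fracSet γ f x).Nonempty := by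
  refine ⟨_, fun i => x i - 1, 1, one_pos, ⟨fun i => ?_, fun i => ?_⟩, rfl⟩ <;> simp

theorem abs_mul_fracAvg_sub_fracAvg_le (hn : 0 < n) {α d B : ℝ} (hd : 0 ≤ d) (hB : 0 ≤ B)
    {b f : (Fin n → ℝ) → ℝ} (hbc : Continuous b) (hb : ∀ y, 0 ≤ b y)
    (hbx : ∀ y, |b x - b y| ≤ B * dist x y ^ d) (hf : LocallyIntegrable f volume)
    (hc : 0 < c) (hx : x ∈ cube a c) :
    |b x * fracAvg α f a c - fracAvg α (fun y => b y * f y) a c| ≤ B * fracAvg (α + d) f a c := by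
  have hQ : IsCompact (cube a c) := isCompact_Icc
  have hfQ : IntegrableOn (fun y => |f y|) (cube a c) volume := (hf.integrableOn_isCompact hQ).abs
  have hbfQ : ∫ y in cube a c, |b y * f y| = ∫ y in cube a c, b y * |f y| := by
    simp only [abs_mul, abs_of_nonneg (hb _)]
  have hosc : ∀ᵐ y ∂volume.restrict (cube a c), |b x - b y| ≤ B * c ^ d :=
    ae_restrict_of_forall_mem hQ.measurableSet fun y hy =>
      (hbx y).trans (by gcongr; exact dist_le_of_mem_cube hc.le hx hy)
  have hint := abs_mul_integral_sub_integral_mul_le hfQ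
    (hfQ.continuousOn_mul hbc.continuousOn hQ) hosc
  simp only [abs_abs] at hint
  have hvol : 0 ≤ vol a c ^ (α / n - 1) := Real.rpow_nonneg ENNReal.toReal_nonneg _
  calc |b x * fracAvg α f a c - fracAvg α (fun y => b y * f y) a c|
      = vol a c ^ (α / n - 1) *
          |b x * (∫ y in cube a c, |f y|) - (∫ y in cube a c, b y * |f y|)| := by
        rw [fracAvg, fracAvg, hbfQ, mul_left_comm, ← mul_sub, abs_mul, abs_of_nonneg hvol]
    _ ≤ vol a c ^ (α / n - 1) * (B * c ^ d * ∫ y in cube a c, |f y|) := by gcongr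
    _ = B * fracAvg (α + d) f a c := by
        rw [fracAvg, ← vol_rpow_mul_rpow hn a hc]
        ring

end Cube

/-- for `b ∈ L(δ(·))` with `b ≥ 0` and `0 ≤ α`, `α + δ(x) < n`,
`|[b, M_α] f (x)| ≤ C ‖b‖_{L(δ(·))} M_{α+δ(x)} f (x)` with `C = C(n)`. -/
theorem statement17 (n : ℕ) (hn : 0 < n) :
    ∃ C : ℝ, 0 ≤ C ∧
      ∀ (α : ℝ), 0 ≤ α →
      ∀ (δ : (Fin n → ℝ) → ℝ), (∀ x, 0 < δ x ∧ α + δ x < n) →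
      ∀ (b : (Fin n → ℝ) → ℝ) (B : ℝ), 0 ≤ B →
        (∀ x y, |b x - b y| ≤ B * dist x y ^ δ x) → (∀ y, 0 ≤ b y) →
      ∀ (f : (Fin n → ℝ) → ℝ), LocallyIntegrable f volume →
      ∀ x : Fin n → ℝ,
        BddAbove (fracSet α f x) →
        BddAbove (fracSet α (fun y => b y * f y) x) →
        BddAbove (fracSet (α + δ x) f x) →
        |b x * fracMax α f x - fracMax α (fun y => b y * f y) x| ≤
          C * B * fracMax (α + δ x) f x := by
  refine ⟨1, zero_le_one, fun α _ δ hδ b B hB hLip hb f hf x hbdS hbdT hbdU => ?_⟩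
  have hbc : Continuous b := continuous_of_abs_sub_le_mul_dist_rpow (fun z => (hδ z).1) hLip
  have hcube : ∀ a c, 0 < c → x ∈ cube a c →
      |b x * fracAvg α f a c - fracAvg α (fun y => b y * f y) a c| ≤
        B * fracMax (α + δ x) f x := fun a c hc hx =>
    (abs_mul_fracAvg_sub_fracAvg_le hn (hδ x).1.le hB hbc hb (hLip x) hf hc hx).trans
      (mul_le_mul_of_nonneg_left (le_csSup hbdU ⟨a, c, hc, hx, rfl⟩) hB)
  rw [one_mul]
  refine abs_mul_csSup_sub_csSup_le (hb x) hbdS hbdT (fracSet_nonempty _ _ _)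
    (fracSet_nonempty _ _ _) ?_ ?_ <;>
  · rintro _ ⟨a, c, hc, hx, rfl⟩
    exact ⟨_, ⟨a, c, hc, hx, rfl⟩, hcube a c hc hx⟩
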